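/- Let A be a finite undirected multigraph with an edge e ∈ E_A whose endpoints u ≠ v are such that V_A = V₁ ⊔ V₂ with u ∈ V₁, v ∈ V₂ and every edge of A other than e has both endpoints in V₁ or both in V₂ (e is a bridge); write A₁, A₂ for the induced subgraphs on V₁, V₂, and A∖e for the multigraph with vertex set V_A and edge set E_A ∖ {e}, so A∖e = A₁ + A₂. Let β₁ : A₁ → B₁ and β₂ : A₂ → B₂ be injective homomorphisms, β : A∖e → B₁ + B₂ their disjoint union, α : A∖e → A the evident inclusion homomorphism, and let B be the multigraph obtained from the disjoint union B₁ + B₂ by adding one new edge ê with endpoints β₁(u) and β₂(v), with inclusion ι : B₁ + B₂ → B. Then for every finite undirected multigraph Z and every injective homomorphism g : B₁ + B₂ → Z, the following are equivalent: (i) there exists an injective homomorphism h : A → Z with h ∘ α = g ∘ β; (ii) there exists an injective homomorphism k : B → Z with k ∘ ι = g. -/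

import Mathlib

/-- A finite undirected multigraph: a finite vertex set, a finite edge set, and an
incidence map assigning to each edge its unordered pair of endpoints (loops allowed). -/
structure MG where
  V : Type
  E : Type
  finV : Finite V
  finE : Finite E
  inc : E → Sym2 V

/-- A homomorphism of finite undirected multigraphs: a pair of maps on vertices and edges
compatible with the incidence maps. -/
structure MG.Hom (G H : MG) where
  vmap : G.V → H.V
  emap : G.E → H.E
  comm : ∀ e, H.inc (emap e) = Sym2.map vmap (G.inc e)

/-- A homomorphism is injective if both its components are injective. -/
def MG.Hom.Injective {G H : MG} (φ : G.Hom H) : Prop :=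
  Function.Injective φ.vmap ∧ Function.Injective φ.emap

/-- A homomorphism is surjective if both its components are surjective. -/
def MG.Hom.Surjective {G H : MG} (φ : G.Hom H) : Prop :=
  Function.Surjective φ.vmap ∧ Function.Surjective φ.emap

/-- A homomorphism is an isomorphism if both its components are bijective. -/
def MG.Hom.IsIso {G H : MG} (φ : G.Hom H) : Prop :=
  Function.Bijective φ.vmap ∧ Function.Bijective φ.emap

/-- Composition of homomorphisms of multigraphs. -/
def MG.Hom.comp {G H K : MG} (ψ : H.Hom K) (φ : G.Hom H) : G.Hom K where
  vmap := ψ.vmap ∘ φ.vmap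
  emap := ψ.emap ∘ φ.emap
  comm := by
    intro e
    simp only [Function.comp_apply, ψ.comm, φ.comm, Sym2.map_map]

namespace MG

/-- The disjoint union (sum) of two finite undirected multigraphs. -/
def sum (G H : MG) : MG where
  V := G.V ⊕ H.V
  E := G.E ⊕ H.E
  finV := by have := G.finV; have := H.finV; exact inferInstance
  finE := by have := G.finE; have := H.finE; exact inferInstance
  inc := Sum.elim (fun e => Sym2.map Sum.inl (G.inc e)) (fun e => Sym2.map Sum.inr (H.inc e))

/-- The multigraph `G ∖ e` obtained from `G` by deleting the edge `e` (keeping all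
vertices). -/
def deleteEdge (G : MG) (e : G.E) : MG where
  V := G.V
  E := {x : G.E // x ≠ e}
  finV := G.finV
  finE := by have := G.finE; exact inferInstance
  inc := fun x => G.inc x.val

/-- The evident inclusion homomorphism `G ∖ e → G`. -/
def deleteEdgeHom (G : MG) (e : G.E) : (G.deleteEdge e).Hom G where
  vmap := id
  emap := Subtype.val
  comm := by intro x; simp [deleteEdge, Sym2.map_id]

/-- The multigraph obtained from `G` by adding one new edge with endpoints `a` and `b`. -/
def addEdge (G : MG) (a b : G.V) : MG where
  V := G.V
  E := Option G.E
  finV := G.finV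
  finE := by have := G.finE; have : Fintype G.E := Fintype.ofFinite _; exact inferInstance
  inc := fun x => x.elim s(a, b) G.inc

/-- The evident inclusion homomorphism from `G` into `G` with one extra edge added. -/
def addEdgeHom (G : MG) (a b : G.V) : G.Hom (G.addEdge a b) where
  vmap := id
  emap := some
  comm := by intro x; simp [addEdge, Sym2.map_id]

end MG

/-!
Both sides say that `Z` has an edge `z` joining `g (β u)` and `g (β v)` which is not already
used by the injective map being extended: for `A` by `g ∘ β`, for `B` by `g`. These two
conditions agree because an edge in the image of `g` joining those vertices would come from
an edge of `B₁ + B₂` joining `β u ∈ B₁` to `β v ∈ B₂`, and a disjoint union has no such edge.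
-/

theorem Function.Injective.optionElim {α β : Type*} {f : α → β} {z : β}
    (hf : Function.Injective f) (hz : ∀ x, f x ≠ z) :
    Function.Injective fun o : Option α => o.elim z f := by
  rintro (_ | x) (_ | y) hxy
  · rfl
  · exact absurd hxy.symm (hz y)
  · exact absurd hxy (hz x)
  · exact congrArg some (hf hxy)

namespace MG

variable {G H Z : MG}

theorem Hom.ext {φ ψ : G.Hom Z} (hv : φ.vmap = ψ.vmap) (he : φ.emap = ψ.emap) : φ = ψ := by
  cases φ; cases ψ; cases hv; cases he; rfl

theorem Hom.Injective.comp {ψ : H.Hom Z} {φ : G.Hom H} (hψ : ψ.Injective)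
    (hφ : φ.Injective) : (ψ.comp φ).Injective :=
  ⟨hψ.1.comp hφ.1, hψ.2.comp hφ.2⟩

theorem sum_inc_ne_inl_inr (x : (G.sum H).E) (a : G.V) (b : H.V) :
    (G.sum H).inc x ≠ s(Sum.inl a, Sum.inr b) := by
  intro hx
  have hl : Sum.inl a ∈ (G.sum H).inc x := hx ▸ Sym2.mem_mk_left _ _
  have hr : Sum.inr b ∈ (G.sum H).inc x := hx ▸ Sym2.mem_mk_right _ _
  cases x with
  | inl x =>
    obtain ⟨_, _, h⟩ := Sym2.mem_map.mp hr
    exact Sum.inl_ne_inr h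
  | inr x =>
    obtain ⟨_, _, h⟩ := Sym2.mem_map.mp hl
    exact Sum.inr_ne_inl h

def addEdgeExtend {a b : G.V} (f : G.Hom Z) (z : Z.E) (hz : Z.inc z = s(f.vmap a, f.vmap b)) :
    (G.addEdge a b).Hom Z where
  vmap := f.vmap
  emap o := o.elim z f.emap
  comm
    | none => hz
    | some x => f.comm x

theorem exists_injective_extension_addEdge_iff {a b : G.V} {f : G.Hom Z} (hf : f.Injective) :
    (∃ k : (G.addEdge a b).Hom Z, k.Injective ∧ k.comp (G.addEdgeHom a b) = f) ↔
      ∃ z, Z.inc z = s(f.vmap a, f.vmap b) ∧ ∀ x, f.emap x ≠ z := by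
  constructor
  · rintro ⟨k, hk, rfl⟩
    exact ⟨k.emap none, k.comm none, fun x hx => Option.some_ne_none x (hk.2 hx)⟩
  · rintro ⟨z, hz, hfz⟩
    exact ⟨addEdgeExtend f z hz, ⟨hf.1, hf.2.optionElim hfz⟩, Hom.ext rfl rfl⟩

def deleteEdgeExtend [DecidableEq G.E] {e : G.E} (f : (G.deleteEdge e).Hom Z) (z : Z.E)
    (hz : Z.inc z = Sym2.map f.vmap (G.inc e)) : G.Hom Z where
  vmap := f.vmap
  emap x := ((Equiv.optionSubtypeNe e).symm x).elim z f.emap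
  comm x := by
    obtain rfl | hx := eq_or_ne x e
    · rw [Equiv.optionSubtypeNe_symm_self]
      exact hz
    · rw [Equiv.optionSubtypeNe_symm_of_ne hx]
      exact f.comm _

theorem exists_injective_extension_deleteEdge_iff {e : G.E} {f : (G.deleteEdge e).Hom Z}
    (hf : f.Injective) :
    (∃ h : G.Hom Z, h.Injective ∧ h.comp (G.deleteEdgeHom e) = f) ↔
      ∃ z, Z.inc z = Sym2.map f.vmap (G.inc e) ∧ ∀ x, f.emap x ≠ z := by
  classical
  constructor
  · rintro ⟨h, hh, rfl⟩
    exact ⟨h.emap e, h.comm e, fun x hx => x.2 (hh.2 hx)⟩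
  · rintro ⟨z, hz, hfz⟩
    refine ⟨deleteEdgeExtend f z hz,
      ⟨hf.1, (hf.2.optionElim hfz).comp (Equiv.injective _)⟩, Hom.ext rfl ?_⟩
    funext x
    exact congrArg (Option.elim · z f.emap) (Equiv.optionSubtypeNe_symm_of_ne x.2)

end MG

theorem mg_bridge_shift_general (A B₁ B₂ : MG) (e : A.E) (P : A.V → Prop) (u v : A.V)
    (hinc : A.inc e = s(u, v)) (hu : P u) (hv : ¬ P v)
    (β : (A.deleteEdge e).Hom (B₁.sum B₂)) (hβ : β.Injective)
    (hβ₁ : ∀ w : A.V, P w → ∃ b : B₁.V, β.vmap w = Sum.inl b)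
    (hβ₂ : ∀ w : A.V, ¬ P w → ∃ b : B₂.V, β.vmap w = Sum.inr b)
    (Z : MG) (g : (B₁.sum B₂).Hom Z) (hg : g.Injective) :
    (∃ h : A.Hom Z, h.Injective ∧ h.comp (A.deleteEdgeHom e) = g.comp β) ↔
    (∃ k : ((B₁.sum B₂).addEdge (β.vmap u) (β.vmap v)).Hom Z, k.Injective ∧
      k.comp ((B₁.sum B₂).addEdgeHom (β.vmap u) (β.vmap v)) = g) := by
  have hendpoints :
      Sym2.map (g.comp β).vmap (A.inc e) = s(g.vmap (β.vmap u), g.vmap (β.vmap v)) :=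
    congrArg (Sym2.map (g.comp β).vmap) hinc
  rw [MG.exists_injective_extension_deleteEdge_iff (hg.comp hβ),
    MG.exists_injective_extension_addEdge_iff hg, hendpoints]
  refine exists_congr fun z => and_congr_right fun hz =>
    ⟨fun _ y hy => ?_, fun hgz x => hgz (β.emap x)⟩
  obtain ⟨b₁, hb₁⟩ := hβ₁ u hu
  obtain ⟨b₂, hb₂⟩ := hβ₂ v hv
  have hy_inc : (B₁.sum B₂).inc y = s(β.vmap u, β.vmap v) :=
    Sym2.map.injective hg.1 (by rw [← g.comm, hy, hz, Sym2.map_mk])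
  rw [hb₁, hb₂] at hy_inc
  exact MG.sum_inc_ne_inl_inr y b₁ b₂ hy_inc

/-- **Bridges and the Shift construction (satisfaction level).** Let `e` be a bridge of
`A` with endpoints `u ≠ v` separated by the partition `P` of the vertices (so that
`A ∖ e = A₁ + A₂`), let `β : A ∖ e → B₁ + B₂` be the disjoint union of injective
homomorphisms `β₁ : A₁ → B₁` and `β₂ : A₂ → B₂` (encoded by the hypotheses that `β` is
injective and maps the two parts of the partition into the two summands), let
`α : A ∖ e → A` be the inclusion, and let `B` be `B₁ + B₂` with one new edge joining
`β₁(u)` and `β₂(v)`, with inclusion `ι : B₁ + B₂ → B`. Then for every `Z` and every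
injective `g : B₁ + B₂ → Z`: there is an injective `h : A → Z` with `h ∘ α = g ∘ β`
iff there is an injective `k : B → Z` with `k ∘ ι = g`. -/
theorem mg_bridge_shift (A B₁ B₂ : MG) (e : A.E) (P : A.V → Prop) (u v : A.V)
    (hinc : A.inc e = s(u, v)) (huv : u ≠ v) (hu : P u) (hv : ¬ P v)
    (hbridge : ∀ x : A.E, x ≠ e → (∀ w ∈ A.inc x, P w) ∨ (∀ w ∈ A.inc x, ¬ P w))
    (β : (A.deleteEdge e).Hom (B₁.sum B₂)) (hβ : β.Injective)
    (hβ₁ : ∀ w : A.V, P w → ∃ b : B₁.V, β.vmap w = Sum.inl b)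
    (hβ₂ : ∀ w : A.V, ¬ P w → ∃ b : B₂.V, β.vmap w = Sum.inr b)
    (Z : MG) (g : (B₁.sum B₂).Hom Z) (hg : g.Injective) :
    (∃ h : A.Hom Z, h.Injective ∧ h.comp (A.deleteEdgeHom e) = g.comp β) ↔
    (∃ k : ((B₁.sum B₂).addEdge (β.vmap u) (β.vmap v)).Hom Z, k.Injective ∧
      k.comp ((B₁.sum B₂).addEdgeHom (β.vmap u) (β.vmap v)) = g) :=
  mg_bridge_shift_general A B₁ B₂ e P u v hinc hu hv β hβ hβ₁ hβ₂ Z g hg
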